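/- Let G_M be the switching graph of a CHA instance I with respect to a popular matching M. Then every switching move on G_M (reversing the direction and flipping the weight of every edge of a switching set) produces the switching graph of another popular matching of I; that is, the matching M' in which each agent a whose edge lies in the switching set is reassigned from M(a) to the other element of {f(a), s(a)}, and all other agents keep their assignment, is a popular matching of I. -/

import Mathlib

/-!
With last resorts every agent is matched in a popular matching, so a popular matching is the
graph of an assignment `σ : A → H`. Such a graph is popular iff every house that some agent
prefers to its own is filled to capacity by agents ranking it first (`EnviedHousesFull`).
Popularity forces this, since otherwise moving one or two agents up, possibly demoting a third
to its last resort, gives a more popular matching. Conversely, comparing with any matching `M'`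
house by house, the agents who improve by entering a house `p` are at most as many as the
first-choice agents of `p` they push out, and those are worse off.

This condition is equivalent to the Manlove–Sng characterisation (`IsFSAssignment`): every
agent is at `f(a)` or `s(a)`, and every house `h` holds `min (c h) |f(h)|` agents of `f(h)`.
A switching move keeps it: agents only move between `f(a)` and `s(a)`; along a switching path
or cycle the edges entering and leaving a house telescope, so the load of `h` grows by at most
the number of switching paths ending at `h`, which is at most `u_M(h)`; and the `+1` edges
entering `h` pair off with the `-1` edges leaving it, so `h` keeps its number of `f(h)`-agents.
-/

/-- A Capacitated House Allocation (CHA) instance: agents `A`, houses `H`, a capacity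
function `cap : H → ℤ_{>0}`, and for each agent a strict preference order (lower rank
means more preferred) over its adjacent houses, augmented with a unique last-resort
house `l(a)` of capacity `1` and lowest preference, appearing only on `a`'s list. -/
structure CHAInstance (A H : Type*) where
  adj : A → H → Prop
  rank : A → H → ℕ
  rank_strict : ∀ a h h', adj a h → adj a h' → rank a h = rank a h' → h = h'
  cap : H → ℕ
  cap_pos : ∀ h, 0 < cap h
  lastResort : A → H
  lastResort_injective : Function.Injective lastResort
  lastResort_adj : ∀ a, adj a (lastResort a)
  lastResort_worst : ∀ a h, adj a h → h ≠ lastResort a → rank a h < rank a (lastResort a)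
  lastResort_only : ∀ a a', adj a' (lastResort a) → a' = a
  lastResort_cap : ∀ a, cap (lastResort a) = 1

namespace CHAInstance

variable {A H : Type*}

/-- A matching of the CHA instance `I`: each agent is matched to at most one adjacent
house, and each house `h` is matched to at most `cap h` agents. -/
def IsMatching (I : CHAInstance A H) (M : Set (A × H)) : Prop :=
  (∀ p ∈ M, I.adj p.1 p.2) ∧ (∀ p ∈ M, ∀ q ∈ M, p.1 = q.1 → p = q) ∧
    (∀ h : H, {a | (a, h) ∈ M}.ncard ≤ I.cap h)

/-- Agent `a` prefers matching `M` to matching `M'`: `a` is matched in `M` and either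
unmatched in `M'`, or strictly prefers its house in `M` to its house in `M'`. -/
def Prefers (I : CHAInstance A H) (M M' : Set (A × H)) (a : A) : Prop :=
  ∃ h, (a, h) ∈ M ∧ ∀ h', (a, h') ∈ M' → I.rank a h < I.rank a h'

/-- `M` is more popular than `M'`. -/
def MorePopular [Fintype A] (I : CHAInstance A H) (M M' : Set (A × H)) : Prop :=
  Nat.card {a | Prefers I M M' a} > Nat.card {a | Prefers I M' M a}

/-- `M` is a popular matching of `I`. -/
def IsPopular [Fintype A] (I : CHAInstance A H) (M : Set (A × H)) : Prop :=
  I.IsMatching M ∧ ∀ M', I.IsMatching M' → ¬ MorePopular I M' M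

/-- `h = f(a)`: house `h` is the (unique) first choice of agent `a`. -/
def IsFirstChoice (I : CHAInstance A H) (a : A) (h : H) : Prop :=
  I.adj a h ∧ ∀ h', I.adj a h' → I.rank a h ≤ I.rank a h'

/-- `f(h)`: the set of agents whose first choice is `h`. -/
def fSet (I : CHAInstance A H) (h : H) : Set A := {a | IsFirstChoice I a h}

/-- `h` is an `f`-house if it is the first choice of some agent. -/
def IsFHouse (I : CHAInstance A H) (h : H) : Prop := ∃ a, IsFirstChoice I a h

/-- The defining condition for `s(a)`: `h` is not an `f`-house, or `h` is an `f`-house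
with `h ≠ f(a)` and `|f(h)| < c(h)`. -/
def SCond (I : CHAInstance A H) (a : A) (h : H) : Prop :=
  ¬ IsFHouse I h ∨ (¬ IsFirstChoice I a h ∧ (fSet I h).ncard < I.cap h)

/-- `h = s(a)`: house `h` is the highest-ranked house on `a`'s preference list
satisfying `SCond`. -/
def IsSecondChoice (I : CHAInstance A H) (a : A) (h : H) : Prop :=
  I.adj a h ∧ SCond I a h ∧ ∀ h', I.adj a h' → SCond I a h' → I.rank a h ≤ I.rank a h'

/-- The switching graph `G_M` of `I` with respect to a popular matching `M`:
`SwEdge I M a src tgt w` says that agent `a` contributes the directed edge from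
`src = M(a)` to `tgt`, the other element of `{f(a), s(a)}`, with weight
`w = -1` if `M(a) = f(a)` and `w = +1` otherwise. -/
def SwEdge (I : CHAInstance A H) (M : Set (A × H)) (a : A) (src tgt : H) (w : ℤ) :
    Prop :=
  (a, src) ∈ M ∧
    ((IsFirstChoice I a src ∧ IsSecondChoice I a tgt ∧ w = -1) ∨
     (IsSecondChoice I a src ∧ IsFirstChoice I a tgt ∧ w = 1))

/-- The unsaturation degree `u_M(h) = c(h) - |M(h)|` of a house `h`. -/
noncomputable def unsatDeg (I : CHAInstance A H) (M : Set (A × H)) (h : H) : ℕ :=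
  I.cap h - {a | (a, h) ∈ M}.ncard

/-- A house is saturated if its unsaturation degree is `0`. -/
def Saturated (I : CHAInstance A H) (M : Set (A × H)) (h : H) : Prop :=
  unsatDeg I M h = 0

end CHAInstance

/-- A directed weighted edge of a switching graph, labelled by the agent that
contributes it. -/
structure DirEdge (A H : Type*) where
  agent : A
  src : H
  tgt : H
  wt : ℤ

namespace CHAInstance

variable {A H : Type*}

/-- `e` is an edge of the switching graph `G_M`. -/
def ValidEdge (I : CHAInstance A H) (M : Set (A × H)) (e : DirEdge A H) : Prop :=
  SwEdge I M e.agent e.src e.tgt e.wt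

/-- Consecutive edges of the list are head-to-tail. -/
def ChainOK (l : List (DirEdge A H)) : Prop :=
  ∀ (i : ℕ) (h : i + 1 < l.length),
    (l.get ⟨i, Nat.lt_of_succ_lt h⟩).tgt = (l.get ⟨i + 1, h⟩).src

/-- Consecutive edges of the list have alternating (opposite) weights. -/
def AltWt (l : List (DirEdge A H)) : Prop :=
  ∀ (i : ℕ) (h : i + 1 < l.length),
    (l.get ⟨i + 1, h⟩).wt = -(l.get ⟨i, Nat.lt_of_succ_lt h⟩).wt

/-- The list of vertices visited by a list of head-to-tail edges. -/
def PathVerts (l : List (DirEdge A H)) : List H :=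
  l.map (·.src) ++ (l.getLast?.map (·.tgt)).toList

/-- A (nonempty) directed path in the switching graph `G_M`: head-to-tail edges of
`G_M` visiting pairwise distinct vertices. -/
def IsDirPath (I : CHAInstance A H) (M : Set (A × H)) (l : List (DirEdge A H)) : Prop :=
  l ≠ [] ∧ (∀ e ∈ l, ValidEdge I M e) ∧ ChainOK l ∧ (PathVerts l).Nodup

/-- An alternating path of `G_M`: a directed path that starts with a `+1` edge, ends
with a `-1` edge, and alternates between `+1` and `-1` edges. -/
def IsAlternatingPath (I : CHAInstance A H) (M : Set (A × H))
    (l : List (DirEdge A H)) : Prop :=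
  IsDirPath I M l ∧ AltWt l ∧
    (∀ e, l.head? = some e → e.wt = 1) ∧ (∀ e, l.getLast? = some e → e.wt = -1)

/-- A switching path of `G_M`: an alternating path ending at an unsaturated vertex. -/
def IsSwitchingPath (I : CHAInstance A H) (M : Set (A × H))
    (l : List (DirEdge A H)) : Prop :=
  IsAlternatingPath I M l ∧ ∀ e, l.getLast? = some e → 0 < unsatDeg I M e.tgt

/-- A directed cycle in the switching graph `G_M`: head-to-tail edges of `G_M`, closing
up cyclically, visiting pairwise distinct vertices. -/
def IsDirCycle (I : CHAInstance A H) (M : Set (A × H)) (l : List (DirEdge A H)) : Prop :=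
  l ≠ [] ∧ (∀ e ∈ l, ValidEdge I M e) ∧ ChainOK l ∧
    (∀ e f, l.getLast? = some e → l.head? = some f → e.tgt = f.src) ∧
    (l.map (·.src)).Nodup

/-- A switching cycle of `G_M`: an even-length directed cycle whose edge weights
alternate (cyclically) between `-1` and `+1`. -/
def IsSwitchingCycle (I : CHAInstance A H) (M : Set (A × H))
    (l : List (DirEdge A H)) : Prop :=
  IsDirCycle I M l ∧ Even l.length ∧ AltWt l ∧
    (∀ e f, l.getLast? = some e → l.head? = some f → f.wt = -e.wt)

open scoped Classical in
/-- A switching set of `G_M`, given as a finite list of pieces: each piece is a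
switching path or a switching cycle, the pieces are pairwise edge-disjoint, and at most
`k` of the switching paths end at any vertex of unsaturation degree `k`. -/
noncomputable def IsSwitchingSet (I : CHAInstance A H) (M : Set (A × H))
    (S : List (List (DirEdge A H))) : Prop :=
  (∀ l ∈ S, IsSwitchingPath I M l ∨ IsSwitchingCycle I M l) ∧
    S.Pairwise (fun l₁ l₂ => ∀ e ∈ l₁, e ∉ l₂) ∧
    ∀ h : H,
      (S.countP (fun l => decide (IsSwitchingPath I M l ∧
        ∃ e, l.getLast? = some e ∧ e.tgt = h))) ≤ unsatDeg I M h

/-- The set of edges of `G_M` that are reversed (with flipped weight) in `G_{M'}`. -/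
def ReversedEdges (I : CHAInstance A H) (M M' : Set (A × H)) : Set (DirEdge A H) :=
  {e | ValidEdge I M e ∧ SwEdge I M' e.agent e.tgt e.src (-e.wt)}

/-- The matching obtained from `M` by the switching move along the switching set `S`:
every agent whose edge lies in `S` is reassigned from the source to the target of its
edge; all other agents keep their assignment. -/
def SwitchingMove (M : Set (A × H)) (S : List (List (DirEdge A H))) : Set (A × H) :=
  (M \ {p | ∃ l ∈ S, ∃ e ∈ l, p = (e.agent, e.src)}) ∪
    {p | ∃ l ∈ S, ∃ e ∈ l, p = (e.agent, e.tgt)}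

end CHAInstance
theorem Set.ncard_setOf_add_ite_eq {α : Type*} [Finite α] {p q : α → Prop} {a : α}
    [Decidable (p a)] [Decidable (q a)] (hpq : ∀ x ≠ a, p x ↔ q x) :
    {x | p x}.ncard + (if q a then 1 else 0) = {x | q x}.ncard + (if p a then 1 else 0) := by
  have hsplit (r : α → Prop) [Decidable (r a)] :
      {x | r x}.ncard = ({x | r x} \ {a}).ncard + if r a then 1 else 0 := by
    split_ifs with hr
    · exact (Set.ncard_sdiff_singleton_add_one hr (Set.toFinite _)).symm
    · rw [Set.sdiff_singleton_eq_self (s := {x | r x}) hr, add_zero]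
  have hdiff : {x | p x} \ {a} = {x | q x} \ {a} := by
    ext x
    by_cases hx : x = a <;> simp [hx, hpq]
  rw [hsplit p, hsplit q, hdiff]
  omega

theorem List.IsChain.countP_add_ite {α : Type*} {R : α → α → Prop} {P Q : α → Bool}
    (hPQ : ∀ a b, R a b → P a = Q b) {l : List α} (hl : l.IsChain R) (hne : l ≠ []) :
    l.countP P + (if Q (l.head hne) then 1 else 0) =
      l.countP Q + (if P (l.getLast hne) then 1 else 0) := by
  induction l with
  | nil => exact absurd rfl hne
  | cons a l ih =>
    cases l with
    | nil =>
      rw [List.head_cons, List.getLast_singleton, List.countP_cons, List.countP_cons,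
        List.countP_nil, List.countP_nil]
      omega
    | cons b l =>
      rw [List.isChain_cons_cons] at hl
      have := ih hl.2 (List.cons_ne_nil b l)
      rw [List.countP_cons (l := b :: l), List.countP_cons (l := b :: l), List.head_cons,
        List.getLast_cons_cons]
      rw [List.head_cons] at this
      rw [hPQ a b hl.1]
      omega

namespace CHAInstance

section Reassign

variable {α β : Type*} [DecidableEq α]

def reassign (f : α → β) (L : List (α × β)) : α → β :=
  L.foldr (fun p g => Function.update g p.1 p.2) f

theorem reassign_cons (f : α → β) (p : α × β) (L : List (α × β)) :
    reassign f (p :: L) = Function.update (reassign f L) p.1 p.2 := rfl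

theorem reassign_of_notMem {f : α → β} {L : List (α × β)} {x : α} (hx : x ∉ L.map Prod.fst) :
    reassign f L x = f x := by
  induction L with
  | nil => rfl
  | cons p L ih =>
    simp only [List.map_cons, List.mem_cons, not_or] at hx
    rw [reassign_cons, Function.update_of_ne hx.1, ih hx.2]

theorem reassign_of_mem {f : α → β} {L : List (α × β)} (hL : (L.map Prod.fst).Nodup)
    {p : α × β} (hp : p ∈ L) : reassign f L p.1 = p.2 := by
  induction L with
  | nil => simp at hp
  | cons q L ih =>
    simp only [List.map_cons, List.nodup_cons] at hL
    rcases List.mem_cons.1 hp with rfl | hp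
    · rw [reassign_cons, Function.update_self]
    · have hne : p.1 ≠ q.1 := fun h => hL.1 (h ▸ List.mem_map_of_mem hp)
      rw [reassign_cons, Function.update_of_ne hne, ih hL.2 hp]

theorem ncard_reassign_add [Finite α] (R : α → β → Prop) [∀ x y, Decidable (R x y)]
    (f : α → β) {L : List (α × β)} (hL : (L.map Prod.fst).Nodup) :
    {x | R x (reassign f L x)}.ncard + L.countP (fun p => R p.1 (f p.1)) =
      {x | R x (f x)}.ncard + L.countP (fun p => R p.1 p.2) := by
  induction L with
  | nil => rfl
  | cons p L ih =>
    simp only [List.map_cons, List.nodup_cons] at hL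
    have hstep := Set.ncard_setOf_add_ite_eq (a := p.1) (p := fun x => R x (reassign f L x))
      (q := fun x => R x (Function.update (reassign f L) p.1 p.2 x))
      (fun x hx => by rw [Function.update_of_ne hx])
    simp only [Function.update_self, reassign_of_notMem hL.1] at hstep
    simp only [reassign_cons, List.countP_cons, decide_eq_true_eq]
    have := ih hL.2
    omega

end Reassign

variable {A H : Type*} {I : CHAInstance A H} {a b c : A} {h h' : H} {σ τ : A → H}
  {M : Set (A × H)} {e e' : DirEdge A H} {l : List (DirEdge A H)}
  {S : List (List (DirEdge A H))}

theorem IsFirstChoice.eq (h₁ : IsFirstChoice I a h) (h₂ : IsFirstChoice I a h') : h = h' :=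
  I.rank_strict a h h' h₁.1 h₂.1 (le_antisymm (h₁.2 _ h₂.1) (h₂.2 _ h₁.1))

theorem IsSecondChoice.eq (h₁ : IsSecondChoice I a h) (h₂ : IsSecondChoice I a h') : h = h' :=
  I.rank_strict a h h' h₁.1 h₂.1 (le_antisymm (h₁.2.2 _ h₂.1 h₂.2.1) (h₂.2.2 _ h₁.1 h₁.2.1))

theorem IsFirstChoice.rank_lt (hf : IsFirstChoice I a h) (hadj : I.adj a h') (hne : h' ≠ h) :
    I.rank a h < I.rank a h' :=
  (hf.2 _ hadj).lt_of_ne fun heq => hne (I.rank_strict a h h' hf.1 hadj heq).symm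

theorem IsFirstChoice.not_isSecondChoice (hf : IsFirstChoice I a h) : ¬ IsSecondChoice I a h :=
  fun ⟨_, hs, _⟩ => hs.elim (· ⟨a, hf⟩) (·.1 hf)

theorem exists_adj_rank_min (a : A) (P : H → Prop) (hadj : I.adj a h) (hP : P h) :
    ∃ h, I.adj a h ∧ P h ∧ ∀ h', I.adj a h' → P h' → I.rank a h ≤ I.rank a h' := by
  obtain ⟨h, ⟨hadj, hP⟩, hmin⟩ :=
    (measure (I.rank a)).wf.has_min {h | I.adj a h ∧ P h} ⟨h, hadj, hP⟩
  exact ⟨h, hadj, hP, fun h' ha hp => not_lt.1 (hmin h' ⟨ha, hp⟩)⟩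

theorem exists_isFirstChoice (I : CHAInstance A H) (a : A) : ∃ h, IsFirstChoice I a h :=
  let ⟨h, hadj, _, hmin⟩ := exists_adj_rank_min a (fun _ => True) (I.lastResort_adj a) trivial
  ⟨h, hadj, fun h' ha => hmin h' ha trivial⟩

theorem exists_isSecondChoice (hadj : I.adj a h) (hnf : ¬ IsFirstChoice I a h) :
    ∃ h', IsSecondChoice I a h' := by
  have hl : ¬ IsFirstChoice I a (I.lastResort a) := fun hf =>
    (hf.rank_lt hadj fun he => hnf (he ▸ hf)).not_ge
      (I.lastResort_worst a h hadj fun he => hnf (he ▸ hf)).le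
  have hsc : SCond I a (I.lastResort a) :=
    Or.inl fun ⟨b, hb⟩ => hl (I.lastResort_only a b hb.1 ▸ hb)
  obtain ⟨h', hadj', hsc', hmin⟩ := exists_adj_rank_min a (SCond I a) (I.lastResort_adj a) hsc
  exact ⟨h', hadj', hsc', hmin⟩

theorem isMatching_graph_iff :
    IsMatching I σ.graph ↔ (∀ a, I.adj a (σ a)) ∧ ∀ h, {a | σ a = h}.ncard ≤ I.cap h := by
  refine ⟨fun hσ => ⟨fun a => hσ.1 (a, σ a) rfl, hσ.2.2⟩, fun hσ => ⟨?_, ?_, hσ.2⟩⟩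
  · rintro ⟨a, _⟩ rfl
    exact hσ.1 a
  · rintro ⟨a, _⟩ rfl ⟨_, _⟩ rfl rfl
    rfl

theorem prefers_graph_iff : Prefers I τ.graph σ.graph a ↔ I.rank a (τ a) < I.rank a (σ a) :=
  ⟨fun ⟨_, hτ, hlt⟩ => hτ ▸ hlt _ rfl, fun hlt => ⟨_, rfl, fun _ hσ => hσ ▸ hlt⟩⟩

theorem IsMatching.exists_graph_eq (hM : IsMatching I M) (hall : ∀ a, ∃ h, (a, h) ∈ M) :
    ∃ σ : A → H, M = σ.graph := by
  choose σ hσ using hall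
  refine ⟨σ, Set.ext fun ⟨a, h⟩ => ⟨fun hm => ?_, fun he => he ▸ hσ a⟩⟩
  exact congrArg Prod.snd (hM.2.1 _ (hσ a) _ hm rfl)

theorem IsMatching.insert_lastResort [Finite A] (hM : IsMatching I M) (ha : ∀ h, (a, h) ∉ M) :
    IsMatching I (insert (a, I.lastResort a) M) := by
  refine ⟨?_, ?_, fun h => ?_⟩
  · rintro p (rfl | hp)
    exacts [I.lastResort_adj a, hM.1 p hp]
  · rintro ⟨x, h⟩ hp ⟨y, h'⟩ hq (rfl : x = y)
    rcases hp with hp | hp <;> rcases hq with hq | hq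
    · rw [hp, hq]
    · obtain ⟨rfl, -⟩ := Prod.mk.inj hp
      exact absurd hq (ha h')
    · obtain ⟨rfl, -⟩ := Prod.mk.inj hq
      exact absurd hp (ha h)
    · exact hM.2.1 _ hp _ hq rfl
  by_cases hh : h = I.lastResort a
  · subst hh
    have hsub : {x | (x, I.lastResort a) ∈ insert (a, I.lastResort a) M} ⊆ {a} := by
      rintro x (hx | hx)
      exacts [congrArg Prod.fst hx, I.lastResort_only a x (hM.1 _ hx)]
    calc _ ≤ ({a} : Set A).ncard := Set.ncard_le_ncard hsub
      _ = I.cap (I.lastResort a) := by rw [Set.ncard_singleton, I.lastResort_cap]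
  · have hsub : {x | (x, h) ∈ insert (a, I.lastResort a) M} ⊆ {x | (x, h) ∈ M} := by
      rintro x (hx | hx)
      exacts [absurd (congrArg Prod.snd hx) hh, hx]
    exact (Set.ncard_le_ncard hsub).trans (hM.2.2 h)

theorem IsPopular.exists_mem [Fintype A] (hpop : IsPopular I M) (a : A) : ∃ h, (a, h) ∈ M := by
  by_contra! ha
  apply hpop.2 _ (hpop.1.insert_lastResort ha)
  have hworse : {x | Prefers I M (insert (a, I.lastResort a) M) x} = ∅ :=
    Set.eq_empty_of_forall_notMem fun x ⟨h, hm, hlt⟩ =>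
      (hlt h (Set.mem_insert_of_mem _ hm)).false
  have hbetter : a ∈ {x | Prefers I (insert (a, I.lastResort a) M) M x} :=
    ⟨_, Set.mem_insert _ _, fun h hm => absurd hm (ha h)⟩
  rw [MorePopular, Nat.card_coe_set_eq, Nat.card_coe_set_eq, hworse, Set.ncard_empty]
  exact (Set.ncard_pos).2 ⟨a, hbetter⟩

theorem IsPopular.exists_graph_eq [Fintype A] (hpop : IsPopular I M) :
    ∃ σ : A → H, M = σ.graph :=
  hpop.1.exists_graph_eq hpop.exists_mem

section Moves

variable [DecidableEq A]

theorem IsPopular.countP_improving_le [Fintype A] (hpop : IsPopular I σ.graph)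
    {L : List (A × H)} (hL : (L.map Prod.fst).Nodup)
    (hτ : IsMatching I (reassign σ L).graph) :
    L.countP (fun p => I.rank p.1 p.2 < I.rank p.1 (σ p.1)) ≤
      L.countP (fun p => I.rank p.1 (σ p.1) < I.rank p.1 p.2) := by
  have hbetter := ncard_reassign_add (fun x h => I.rank x h < I.rank x (σ x)) σ hL
  have hworse := ncard_reassign_add (fun x h => I.rank x (σ x) < I.rank x h) σ hL
  have hmore := hpop.2 _ hτ
  simp only [lt_self_iff_false, Set.ofPred_false, Set.ncard_empty, decide_false,
    List.countP_false] at hbetter hworse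
  simp only [MorePopular, prefers_graph_iff, Nat.card_coe_set_eq, not_lt] at hmore
  omega

theorem isMatching_graph_reassign [DecidableEq H] [Finite A] (hσ : IsMatching I σ.graph)
    {L : List (A × H)} (hL : (L.map Prod.fst).Nodup) (hadj : ∀ p ∈ L, I.adj p.1 p.2)
    (hcap : ∀ h, {x | σ x = h}.ncard + L.countP (fun p => p.2 = h) ≤
      I.cap h + L.countP (fun p => σ p.1 = h)) :
    IsMatching I (reassign σ L).graph := by
  rw [isMatching_graph_iff] at hσ ⊢
  refine ⟨fun x => ?_, fun h => ?_⟩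
  · by_cases hx : x ∈ L.map Prod.fst
    · obtain ⟨p, hp, rfl⟩ := List.mem_map.1 hx
      exact reassign_of_mem hL hp ▸ hadj p hp
    · exact reassign_of_notMem hx ▸ hσ.1 x
  · have := ncard_reassign_add (fun _ h' => h' = h) σ hL
    have := hcap h
    omega

theorem IsPopular.false_of_promote_two [Fintype A] [DecidableEq H] (hpop : IsPopular I σ.graph)
    (hab : a ≠ b) (hadja : I.adj a h) (hlta : I.rank a h < I.rank a (σ a)) (hb : σ b = h)
    (hadjb : I.adj b h') (hltb : I.rank b h' < I.rank b h)
    (hfree : {x | σ x = h'}.ncard < I.cap h' ∨ h' = σ a) : False := by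
  have hσ := (isMatching_graph_iff.1 hpop.1).2
  have hτ : IsMatching I (reassign σ [(a, h), (b, h')]).graph :=
    isMatching_graph_reassign hpop.1 (by simpa using hab) (by simp [hadja, hadjb]) fun x => by
      have := hσ x
      rcases eq_or_ne h' x with rfl | hx
      · rcases hfree with hfree | rfl <;> simp [List.countP_cons, hb] <;> omega
      · simp [List.countP_cons, hb, hx]
        omega
  have := hpop.countP_improving_le (by simpa using hab) hτ
  simp [hb, hlta, hltb, hlta.not_gt, hltb.not_gt] at this

theorem IsPopular.false_of_promote_two_demote_one [Fintype A] [DecidableEq H]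
    (hpop : IsPopular I σ.graph) (hab : a ≠ b) (hac : a ≠ c) (hbc : b ≠ c)
    (hadja : I.adj a h) (hlta : I.rank a h < I.rank a (σ a)) (hb : σ b = h)
    (hadjb : I.adj b h') (hltb : I.rank b h' < I.rank b h) (hc : σ c = h') : False := by
  have hσ := isMatching_graph_iff.1 hpop.1
  have hnd : ([(a, h), (b, h'), (c, I.lastResort c)].map Prod.fst).Nodup := by
    simp [hab, hac, hbc]
  -- `l(c)` is free: only `c` is adjacent to it, and `c` sits at `h'`, where `b` is adjacent
  have hlc : I.lastResort c ≠ h' := fun he => hbc (I.lastResort_only c b (he ▸ hadjb))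
  have hfree : {x | σ x = I.lastResort c} = ∅ :=
    Set.eq_empty_of_forall_notMem fun x hx => hlc <| by
      obtain rfl := I.lastResort_only c x (hx ▸ hσ.1 x)
      exact hx ▸ hc
  have hτ : IsMatching I (reassign σ [(a, h), (b, h'), (c, I.lastResort c)]).graph :=
    isMatching_graph_reassign hpop.1 hnd (by simp [hadja, hadjb, I.lastResort_adj]) fun x => by
      have := hσ.2 x
      rcases eq_or_ne (I.lastResort c) x with rfl | hx
      · simp [List.countP_cons, hb, hc, hfree, I.lastResort_cap]
        omega
      · simp [List.countP_cons, hb, hc, hx]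
        omega
  have := hpop.countP_improving_le hnd hτ
  simp [hb, hc, hlta, hltb, hlta.not_gt, hltb.not_gt] at this
  split_ifs at this <;> omega

end Moves

theorem IsPopular.ncard_eq_cap_of_rank_lt [Fintype A] (hpop : IsPopular I σ.graph)
    (hadj : I.adj a h) (hlt : I.rank a h < I.rank a (σ a)) :
    {x | σ x = h}.ncard = I.cap h := by
  classical
  have hσ := (isMatching_graph_iff.1 hpop.1).2
  by_contra hne
  have hfree := (hσ h).lt_of_ne hne
  have hτ : IsMatching I (reassign σ [(a, h)]).graph :=
    isMatching_graph_reassign hpop.1 (by simp) (by simpa) fun x => by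
      have := hσ x
      by_cases hx : h = x
      · subst hx
        simp
        omega
      · simp [hx]
        omega
  have := hpop.countP_improving_le (by simp) hτ
  simp [hlt, hlt.not_gt] at this

theorem IsPopular.isFirstChoice_of_rank_lt [Fintype A] (hpop : IsPopular I σ.graph)
    (hadj : I.adj a h) (hlt : I.rank a h < I.rank a (σ a)) (hb : σ b = h) :
    IsFirstChoice I b h := by
  classical
  by_contra hnf
  have hσ := isMatching_graph_iff.1 hpop.1
  obtain ⟨h', hf⟩ := exists_isFirstChoice I b
  have hne : h' ≠ h := fun he => hnf (he ▸ hf)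
  have hltb : I.rank b h' < I.rank b h := hf.rank_lt (hb ▸ hσ.1 b) hne.symm
  have hab : a ≠ b := by rintro rfl; exact hlt.ne (congrArg _ hb.symm)
  by_cases hfree : {x | σ x = h'}.ncard < I.cap h' ∨ h' = σ a
  · exact hpop.false_of_promote_two hab hadj hlt hb hf.1 hltb hfree
  push Not at hfree
  obtain ⟨c, hc⟩ : {x | σ x = h'}.Nonempty :=
    Set.nonempty_of_ncard_ne_zero (by have := I.cap_pos h'; have := hσ.2 h'; omega)
  refine hpop.false_of_promote_two_demote_one hab ?_ ?_ hadj hlt hb hf.1 hltb hc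
  · rintro rfl
    exact hfree.2 hc.symm
  · rintro rfl
    exact hne (hc.symm.trans hb)

def EnviedHousesFull (I : CHAInstance A H) (σ : A → H) : Prop :=
  ∀ a h, I.adj a h → I.rank a h < I.rank a (σ a) →
    {x | σ x = h}.ncard = I.cap h ∧ ∀ x, σ x = h → IsFirstChoice I x h

theorem IsPopular.enviedHousesFull [Fintype A] (hpop : IsPopular I σ.graph) :
    EnviedHousesFull I σ := fun _ _ hadj hlt =>
  ⟨hpop.ncard_eq_cap_of_rank_lt hadj hlt, fun _ hb => hpop.isFirstChoice_of_rank_lt hadj hlt hb⟩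

structure IsFSAssignment (I : CHAInstance A H) (σ : A → H) : Prop where
  ncard_le_cap : ∀ h, {a | σ a = h}.ncard ≤ I.cap h
  first_or_second : ∀ a, IsFirstChoice I a (σ a) ∨ IsSecondChoice I a (σ a)
  min_le : ∀ h, min (I.cap h) (fSet I h).ncard ≤ {a | σ a = h ∧ IsFirstChoice I a h}.ncard

theorem IsFSAssignment.isMatching (hσ : IsFSAssignment I σ) : IsMatching I σ.graph :=
  isMatching_graph_iff.2 ⟨fun a => (hσ.first_or_second a).elim (·.1) (·.1), hσ.ncard_le_cap⟩

theorem full_of_cap_le_ncard_fSet [Finite A] (hcap : {a | σ a = h}.ncard ≤ I.cap h)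
    (hmin : min (I.cap h) (fSet I h).ncard ≤ {a | σ a = h ∧ IsFirstChoice I a h}.ncard)
    (hf : I.cap h ≤ (fSet I h).ncard) :
    {x | σ x = h}.ncard = I.cap h ∧ ∀ x, σ x = h → IsFirstChoice I x h := by
  rw [min_eq_left hf] at hmin
  have hsub : {a | σ a = h ∧ IsFirstChoice I a h} ⊆ {a | σ a = h} := fun _ hx => hx.1
  have heq := Set.eq_of_subset_of_ncard_le hsub (hcap.trans hmin)
  exact ⟨le_antisymm hcap (hmin.trans (Set.ncard_le_ncard hsub)),
    fun x hx => (heq.symm ▸ hx : x ∈ {a | σ a = h ∧ IsFirstChoice I a h}).2⟩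

theorem eq_of_isFirstChoice_of_ncard_fSet_lt [Finite A]
    (hmin : min (I.cap h) (fSet I h).ncard ≤ {a | σ a = h ∧ IsFirstChoice I a h}.ncard)
    (hf : (fSet I h).ncard < I.cap h) (ha : IsFirstChoice I a h) : σ a = h := by
  rw [min_eq_right hf.le] at hmin
  have heq := Set.eq_of_subset_of_ncard_le (fun _ hx => hx.2) hmin
  exact (heq.symm ▸ ha : a ∈ {a | σ a = h ∧ IsFirstChoice I a h}).1

theorem EnviedHousesFull.isFSAssignment [Finite A] (hσ : IsMatching I σ.graph)
    (hP : EnviedHousesFull I σ) : IsFSAssignment I σ := by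
  obtain ⟨hadj, hcap⟩ := isMatching_graph_iff.1 hσ
  have hmin : ∀ h, min (I.cap h) (fSet I h).ncard ≤
      {a | σ a = h ∧ IsFirstChoice I a h}.ncard := by
    intro h
    by_cases hall : ∀ a ∈ fSet I h, σ a = h
    · exact (min_le_right _ _).trans (Set.ncard_le_ncard fun a ha => ⟨hall a ha, ha⟩)
    push Not at hall
    obtain ⟨a, hf, ha⟩ := hall
    obtain ⟨hfull, hfirst⟩ := hP a h hf.1 (hf.rank_lt (hadj a) ha)
    calc min _ _ ≤ {x | σ x = h}.ncard := hfull ▸ min_le_left _ _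
      _ ≤ _ := by
        exact Set.ncard_le_ncard fun x hx => ⟨hx, hfirst x hx⟩
  refine ⟨hcap, fun a => ?_, hmin⟩
  by_contra! hfs
  obtain ⟨s, hs⟩ := exists_isSecondChoice (hadj a) hfs.1
  rcases lt_trichotomy (I.rank a s) (I.rank a (σ a)) with hlt | heq | hgt
  · obtain ⟨hfull, hfirst⟩ := hP a s hs.1 hlt
    obtain ⟨x, hx⟩ : {x | σ x = s}.Nonempty :=
      Set.nonempty_of_ncard_ne_zero (hfull ▸ (I.cap_pos s).ne')
    rcases hs.2.1 with hnf | ⟨-, hlt'⟩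
    · exact hnf ⟨x, hfirst x hx⟩
    · exact hlt'.not_ge (hfull ▸ Set.ncard_le_ncard hfirst)
  · exact hfs.2 (I.rank_strict a s (σ a) hs.1 (hadj a) heq ▸ hs)
  · have hnsc : ¬ SCond I a (σ a) := fun hsc => hgt.not_ge (hs.2.2 _ (hadj a) hsc)
    simp only [SCond, not_or, not_and, not_lt, not_not] at hnsc
    exact hfs.1 ((full_of_cap_le_ncard_fSet (hcap _) (hmin _) (hnsc.2 hfs.1)).2 a rfl)

theorem IsFSAssignment.enviedHousesFull [Finite A] (hσ : IsFSAssignment I σ) :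
    EnviedHousesFull I σ := by
  intro a h hadj hlt
  have hs : IsSecondChoice I a (σ a) :=
    (hσ.first_or_second a).resolve_left fun hf => hlt.not_ge (hf.2 h hadj)
  have hnsc : ¬ SCond I a h := fun hsc => hlt.not_ge (hs.2.2 h hadj hsc)
  simp only [SCond, not_or, not_and, not_lt, not_not] at hnsc
  refine full_of_cap_le_ncard_fSet (hσ.ncard_le_cap h) (hσ.min_le h) ?_
  by_cases hf : IsFirstChoice I a h
  · by_contra! hlt'
    exact hlt.ne (congrArg _ (eq_of_isFirstChoice_of_ncard_fSet_lt (hσ.min_le h) hlt' hf).symm)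
  · exact hnsc.2 hf

theorem EnviedHousesFull.ncard_improving_le [Finite A] (hP : EnviedHousesFull I σ)
    (hM : IsMatching I M) (p : H) :
    ({x | Prefers I M σ.graph x} ∩ {x | (x, p) ∈ M}).ncard ≤
      ({x | Prefers I σ.graph M x} ∩ {x | σ x = p}).ncard := by
  rcases Set.eq_empty_or_nonempty ({x | Prefers I M σ.graph x} ∩ {x | (x, p) ∈ M}) with
    he | ⟨a, ⟨h, ha, hlt⟩, hap⟩
  · rw [he, Set.ncard_empty]
    exact Nat.zero_le _
  obtain rfl : h = p := congrArg Prod.snd (hM.2.1 _ ha _ hap rfl)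
  obtain ⟨hfull, hfirst⟩ := hP a h (hM.1 _ ha) (hlt _ rfl)
  calc _ ≤ ({x | (x, h) ∈ M} \ {x | σ x = h}).ncard := by
        refine Set.ncard_le_ncard fun x ⟨⟨h', hx', hlt'⟩, hx⟩ => ⟨hx, fun hσx => ?_⟩
        obtain rfl : h' = h := congrArg Prod.snd (hM.2.1 _ hx' _ hx rfl)
        exact (hlt' _ hσx).false
    _ ≤ ({x | σ x = h} \ {x | (x, h) ∈ M}).ncard :=
        (Set.ncard_le_ncard_iff_ncard_sdiff_le_ncard_sdiff).1 (hfull ▸ hM.2.2 h)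
    _ ≤ _ := by
        refine Set.ncard_le_ncard fun x ⟨hσx, hxh⟩ => ⟨⟨h, hσx, fun h' hh' => ?_⟩, hσx⟩
        exact (hfirst x hσx).rank_lt (hM.1 _ hh') fun he => hxh (he ▸ hh')

theorem EnviedHousesFull.isPopular [Fintype A] (hσ : IsMatching I σ.graph)
    (hP : EnviedHousesFull I σ) : IsPopular I σ.graph := by
  classical
  refine ⟨hσ, fun M hM hmore => hmore.not_ge ?_⟩
  rw [Nat.card_coe_set_eq, Nat.card_coe_set_eq]
  set B := {x | Prefers I M σ.graph x}
  set W := {x | Prefers I σ.graph M x}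
  set T := Finset.univ.image σ
  have hB : B ⊆ ⋃ p ∈ T, B ∩ {x | (x, p) ∈ M} := fun x hx => by
    obtain ⟨p, hp, hlt⟩ := hx
    obtain ⟨hfull, hfirst⟩ := hP x p (hM.1 _ hp) (hlt _ rfl)
    obtain ⟨y, hy⟩ := Set.nonempty_of_ncard_ne_zero (hfull ▸ (I.cap_pos p).ne')
    exact Set.mem_biUnion (Finset.mem_image.2 ⟨y, Finset.mem_univ _, hy⟩) ⟨⟨p, hp, hlt⟩, hp⟩
  have hW : ∀ p, (W ∩ {x | σ x = p}).ncard = (W.toFinset.filter (σ · = p)).card := fun p => by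
    rw [← Set.ncard_coe_finset]
    congr
    ext
    simp
  calc B.ncard ≤ (⋃ p ∈ T, B ∩ {x | (x, p) ∈ M}).ncard := Set.ncard_le_ncard hB
    _ ≤ ∑ p ∈ T, (B ∩ {x | (x, p) ∈ M}).ncard := T.set_ncard_biUnion_le _
    _ ≤ ∑ p ∈ T, (W ∩ {x | σ x = p}).ncard :=
        Finset.sum_le_sum fun p _ => hP.ncard_improving_le hM p
    _ = W.ncard := by
        rw [Set.ncard_eq_toFinset_card' W, Finset.card_eq_sum_card_fiberwise
          fun x _ => Finset.mem_image_of_mem σ (Finset.mem_univ x)]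
        simp_rw [hW]
        rfl

theorem ValidEdge.isFirstChoice_src_iff (he : ValidEdge I M e) :
    IsFirstChoice I e.agent e.src ↔ e.wt = -1 := by
  rcases he.2 with ⟨hf, -, hw⟩ | ⟨hs, -, hw⟩
  · exact iff_of_true hf hw
  · exact iff_of_false (fun hf => hf.not_isSecondChoice hs) (by omega)

theorem ValidEdge.isFirstChoice_tgt_iff (he : ValidEdge I M e) :
    IsFirstChoice I e.agent e.tgt ↔ e.wt = 1 := by
  rcases he.2 with ⟨-, hs, hw⟩ | ⟨-, hf, hw⟩
  · exact iff_of_false (fun hf => hf.not_isSecondChoice hs) (by omega)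
  · exact iff_of_true hf hw

theorem ValidEdge.tgt_first_or_second (he : ValidEdge I M e) :
    IsFirstChoice I e.agent e.tgt ∨ IsSecondChoice I e.agent e.tgt :=
  (he.2.imp (·.2.1) (·.2.1)).symm

theorem ValidEdge.eq_of_agent_eq (he : ValidEdge I σ.graph e) (he' : ValidEdge I σ.graph e')
    (hag : e.agent = e'.agent) : e = e' := by
  obtain ⟨x, s, t, w⟩ := e
  obtain ⟨x', s', t', w'⟩ := e'
  obtain rfl : x = x' := hag
  obtain rfl : s = s' := he.1.symm.trans he'.1
  rcases he.2 with ⟨hf, hs, rfl⟩ | ⟨hs, hf, rfl⟩ <;>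
    rcases he'.2 with ⟨hf', hs', rfl⟩ | ⟨hs', hf', rfl⟩
  · obtain rfl : t = t' := hs.eq hs'
    rfl
  · exact absurd hs' hf.not_isSecondChoice
  · exact absurd hs hf'.not_isSecondChoice
  · obtain rfl : t = t' := hf.eq hf'
    rfl

def IsAltStep (e e' : DirEdge A H) : Prop := e.tgt = e'.src ∧ e'.wt = -e.wt

theorem isChain_isAltStep (hc : ChainOK l) (ha : AltWt l) : l.IsChain IsAltStep :=
  List.isChain_iff_getElem.2 fun i hi => ⟨hc i hi, ha i hi⟩

section Counting

open scoped Classical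

variable (h)

theorem countP_tgt_add_ite (hl : l.IsChain IsAltStep) (hne : l ≠ []) :
    l.countP (fun e => e.tgt = h) + (if (l.head hne).src = h then 1 else 0) =
      l.countP (fun e => e.src = h) + (if (l.getLast hne).tgt = h then 1 else 0) := by
  have := hl.countP_add_ite (P := fun e => e.tgt = h) (Q := fun e => e.src = h)
    (fun e e' he => by simp [he.1]) hne
  simpa using this

theorem countP_plusIn_add_ite (hl : l.IsChain IsAltStep) (hne : l ≠ []) :
    l.countP (fun e => e.tgt = h ∧ e.wt = 1) +
        (if (l.head hne).src = h ∧ (l.head hne).wt = -1 then 1 else 0) =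
      l.countP (fun e => e.src = h ∧ e.wt = -1) +
        (if (l.getLast hne).tgt = h ∧ (l.getLast hne).wt = 1 then 1 else 0) := by
  have := hl.countP_add_ite (P := fun e => e.tgt = h ∧ e.wt = 1)
    (Q := fun e => e.src = h ∧ e.wt = -1) (fun e e' he => by simp [he.1, he.2]) hne
  simpa using this

theorem countP_tgt_le_of_path_or_cycle (hl : IsSwitchingPath I M l ∨ IsSwitchingCycle I M l) :
    l.countP (fun e => e.tgt = h) ≤ l.countP (fun e => e.src = h) +
      if IsSwitchingPath I M l ∧ ∃ e, l.getLast? = some e ∧ e.tgt = h then 1 else 0 := by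
  rcases hl with hp | ⟨⟨hne, -, hch, hwrap, -⟩, -, ha, -⟩
  · have ⟨⟨⟨hne, _, hch, _⟩, ha, _⟩, _⟩ := hp
    have := countP_tgt_add_ite h (isChain_isAltStep hch ha) hne
    by_cases hend : (l.getLast hne).tgt = h
    · rw [if_pos ⟨hp, _, List.getLast?_eq_some_getLast hne, hend⟩]
      split_ifs at this <;> omega
    · rw [if_neg hend] at this
      omega
  · have := countP_tgt_add_ite h (isChain_isAltStep hch ha) hne
    rw [hwrap _ _ (List.getLast?_eq_some_getLast hne) (List.head?_eq_some_head hne)] at this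
    omega

theorem countP_plusIn_eq_of_path_or_cycle
    (hl : IsSwitchingPath I M l ∨ IsSwitchingCycle I M l) :
    l.countP (fun e => e.tgt = h ∧ e.wt = 1) = l.countP (fun e => e.src = h ∧ e.wt = -1) := by
  rcases hl with ⟨⟨⟨hne, -, hch, -⟩, ha, hhead, hlast⟩, -⟩ |
    ⟨⟨hne, -, hch, hwrap, -⟩, -, ha, hwt⟩
  · have := countP_plusIn_add_ite h (isChain_isAltStep hch ha) hne
    rw [hhead _ (List.head?_eq_some_head hne),
      hlast _ (List.getLast?_eq_some_getLast hne)] at this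
    simpa using this
  · have := countP_plusIn_add_ite h (isChain_isAltStep hch ha) hne
    rw [hwt _ _ (List.getLast?_eq_some_getLast hne) (List.head?_eq_some_head hne),
      hwrap _ _ (List.getLast?_eq_some_getLast hne) (List.head?_eq_some_head hne)] at this
    have hiff : (l.getLast hne).wt = 1 ↔ -(l.getLast hne).wt = -1 := by omega
    simp only [hiff] at this
    omega

theorem IsSwitchingSet.countP_tgt_le (hS : IsSwitchingSet I M S) :
    S.flatten.countP (fun e => e.tgt = h) ≤
      S.flatten.countP (fun e => e.src = h) + unsatDeg I M h := by
  refine le_trans ?_ (Nat.add_le_add_left (hS.2.2 h) _)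
  have hpieces := hS.1
  clear hS
  induction S with
  | nil => simp
  | cons l S ih =>
    have := countP_tgt_le_of_path_or_cycle h (hpieces l List.mem_cons_self)
    have := ih fun l' hl' => hpieces l' (List.mem_cons_of_mem _ hl')
    simp only [List.flatten_cons, List.countP_append, List.countP_cons, decide_eq_true_eq]
    omega

theorem IsSwitchingSet.countP_plusIn_eq (hS : IsSwitchingSet I M S) :
    S.flatten.countP (fun e => e.tgt = h ∧ e.wt = 1) =
      S.flatten.countP (fun e => e.src = h ∧ e.wt = -1) := by
  simp only [List.countP_flatten]
  exact congrArg List.sum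
    (List.map_congr_left fun l hl => countP_plusIn_eq_of_path_or_cycle h (hS.1 l hl))

end Counting

theorem IsSwitchingSet.validEdge (hS : IsSwitchingSet I M S) (he : e ∈ S.flatten) :
    ValidEdge I M e := by
  obtain ⟨l, hl, hel⟩ := List.mem_flatten.1 he
  rcases hS.1 l hl with hp | hc
  exacts [hp.1.1.2.1 e hel, hc.1.2.1 e hel]

theorem IsSwitchingSet.nodup_agent (hS : IsSwitchingSet I σ.graph S) :
    (S.flatten.map DirEdge.agent).Nodup := by
  have hnodup : S.flatten.Nodup := by
    refine List.nodup_flatten.2 ⟨fun l hl => ?_, hS.2.1.imp fun hdisj e he₁ he₂ => hdisj e he₁ he₂⟩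
    rcases hS.1 l hl with hp | hc
    exacts [(List.nodup_append.1 hp.1.1.2.2.2).1.of_map _, hc.1.2.2.2.2.of_map _]
  exact hnodup.map_on fun e he e' he' => (hS.validEdge he).eq_of_agent_eq (hS.validEdge he')

def switchingMoves (S : List (List (DirEdge A H))) : List (A × H) :=
  S.flatten.map fun e => (e.agent, e.tgt)

theorem IsSwitchingSet.nodup_switchingMoves (hS : IsSwitchingSet I σ.graph S) :
    ((switchingMoves S).map Prod.fst).Nodup := by
  simpa [switchingMoves, Function.comp_def] using hS.nodup_agent

theorem IsSwitchingSet.switchingMove_eq [DecidableEq A] (hS : IsSwitchingSet I σ.graph S) :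
    SwitchingMove σ.graph S = (reassign σ (switchingMoves S)).graph := by
  have hnd := hS.nodup_switchingMoves
  have hex (P : DirEdge A H → Prop) : (∃ l ∈ S, ∃ e ∈ l, P e) ↔ ∃ e ∈ S.flatten, P e := by
    aesop
  ext ⟨x, h⟩
  simp only [SwitchingMove, Set.mem_union, Set.mem_sdiff, Set.mem_ofPred_eq, hex, Prod.mk.injEq]
  change (σ x = h ∧ _ ∨ _) ↔ reassign σ (switchingMoves S) x = h
  by_cases hx : ∃ e ∈ S.flatten, e.agent = x
  · obtain ⟨e, he, rfl⟩ := hx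
    rw [reassign_of_mem hnd (p := (e.agent, e.tgt)) (List.mem_map_of_mem he)]
    refine ⟨?_, fun het => Or.inr ⟨e, he, rfl, het.symm⟩⟩
    rintro (⟨hσe, hno⟩ | ⟨e', he', hag, rfl⟩)
    · exact absurd ⟨e, he, rfl, hσe.symm.trans (hS.validEdge he).1⟩ hno
    · rw [(hS.validEdge he).eq_of_agent_eq (hS.validEdge he') hag]
  · have hx' : x ∉ (switchingMoves S).map Prod.fst := by
      simp only [switchingMoves, List.map_map, Function.comp_def, List.mem_map, not_exists,
        not_and]
      exact fun e he hag => hx ⟨e, he, hag⟩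
    rw [reassign_of_notMem hx']
    refine ⟨?_, fun hσx => Or.inl ⟨hσx, fun ⟨e, he, hag, _⟩ => hx ⟨e, he, hag.symm⟩⟩⟩
    rintro (⟨hσx, -⟩ | ⟨e, he, hag, -⟩)
    exacts [hσx, absurd ⟨e, he, hag.symm⟩ hx]

theorem IsSwitchingSet.ncard_reassign_le_cap [Finite A] [DecidableEq A]
    (hS : IsSwitchingSet I σ.graph S) (hcap : {x | σ x = h}.ncard ≤ I.cap h) :
    {x | reassign σ (switchingMoves S) x = h}.ncard ≤ I.cap h := by
  classical
  have hcount := ncard_reassign_add (fun _ h' => h' = h) σ hS.nodup_switchingMoves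
  have hsrc : (switchingMoves S).countP (fun p => σ p.1 = h) =
      S.flatten.countP (fun e => e.src = h) := by
    simp only [switchingMoves, List.countP_map, Function.comp_def]
    exact List.countP_congr fun e he => by rw [(hS.validEdge he).1]
  have htgt : (switchingMoves S).countP (fun p => p.2 = h) =
      S.flatten.countP (fun e => e.tgt = h) := by
    simp only [switchingMoves, List.countP_map, Function.comp_def]
  have hunsat : unsatDeg I σ.graph h = I.cap h - {x | σ x = h}.ncard := rfl
  have := hS.countP_tgt_le h
  omega

theorem IsSwitchingSet.ncard_isFirstChoice_reassign [Finite A] [DecidableEq A]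
    (hS : IsSwitchingSet I σ.graph S) :
    {x | reassign σ (switchingMoves S) x = h ∧ IsFirstChoice I x h}.ncard =
      {x | σ x = h ∧ IsFirstChoice I x h}.ncard := by
  classical
  have hcount := ncard_reassign_add (fun x h' => h' = h ∧ IsFirstChoice I x h) σ
    hS.nodup_switchingMoves
  have hsrc : (switchingMoves S).countP (fun p => σ p.1 = h ∧ IsFirstChoice I p.1 h) =
      S.flatten.countP (fun e => e.src = h ∧ e.wt = -1) := by
    simp only [switchingMoves, List.countP_map, Function.comp_def]
    refine List.countP_congr fun e he => ?_
    simp only [decide_eq_true_eq]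
    rw [(hS.validEdge he).1, ← (hS.validEdge he).isFirstChoice_src_iff]
    exact and_congr_right fun hs => hs ▸ Iff.rfl
  have htgt : (switchingMoves S).countP (fun p => p.2 = h ∧ IsFirstChoice I p.1 h) =
      S.flatten.countP (fun e => e.tgt = h ∧ e.wt = 1) := by
    simp only [switchingMoves, List.countP_map, Function.comp_def]
    refine List.countP_congr fun e he => ?_
    simp only [decide_eq_true_eq]
    rw [← (hS.validEdge he).isFirstChoice_tgt_iff]
    exact and_congr_right fun ht => ht ▸ Iff.rfl
  have := hS.countP_plusIn_eq h
  omega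

theorem IsFSAssignment.reassign_switchingMoves [Finite A] [DecidableEq A]
    (hσ : IsFSAssignment I σ) (hS : IsSwitchingSet I σ.graph S) :
    IsFSAssignment I (reassign σ (switchingMoves S)) := by
  refine ⟨fun h => hS.ncard_reassign_le_cap (hσ.ncard_le_cap h), fun x => ?_,
    fun h => hS.ncard_isFirstChoice_reassign ▸ hσ.min_le h⟩
  by_cases hx : x ∈ (switchingMoves S).map Prod.fst
  · obtain ⟨p, hp, rfl⟩ := List.mem_map.1 hx
    obtain ⟨e, he, rfl⟩ := List.mem_map.1 hp
    rw [reassign_of_mem hS.nodup_switchingMoves hp]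
    exact (hS.validEdge he).tgt_first_or_second
  · rw [reassign_of_notMem hx]
    exact hσ.first_or_second x

end CHAInstance

open CHAInstance in
theorem switchingMove_isPopular_general
    {A H : Type*} [Fintype A] (I : CHAInstance A H)
    (M : Set (A × H)) (hM : IsPopular I M)
    (S : List (List (DirEdge A H))) (hS : IsSwitchingSet I M S) :
    IsPopular I (SwitchingMove M S) := by
  classical
  obtain ⟨σ, rfl⟩ := hM.exists_graph_eq
  have hσ : IsFSAssignment I σ := hM.enviedHousesFull.isFSAssignment hM.1
  have hτ := hσ.reassign_switchingMoves hS
  rw [hS.switchingMove_eq]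
  exact hτ.enviedHousesFull.isPopular hτ.isMatching

open CHAInstance in
/-- Theorem, part (i): every switching move on the switching graph `G_M`
of a CHA instance with respect to a popular matching `M` produces another popular
matching: reassigning every agent whose edge lies in the switching set from its house
in `M` to the other element of `{f(a), s(a)}` yields a popular matching. -/
theorem switchingMove_isPopular
    {A H : Type*} [Fintype A] [Fintype H] (I : CHAInstance A H)
    (M : Set (A × H)) (hM : IsPopular I M)
    (S : List (List (DirEdge A H))) (hS : IsSwitchingSet I M S) :
    IsPopular I (SwitchingMove M S) :=
  switchingMove_isPopular_general I M hM S hS
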